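/- Let μ > 2 be a real number. Then for all natural numbers n and k, the sum over 0 ≤ j ≤ k and 0 ≤ i ≤ n of ((2n+k+1)/((2i+j+1)·(2(n-i)+k-j+1)))^μ is at most 2^μ · S, where S = Σ_{j≥0} Σ_{i≥0} 1/(2i+j+1)^μ, which is finite. -/

import Mathlib

open Finset

/-!
Since `(2i+j+1) + (2(n-i)+k-j+1) = 2n+k+2`, each summand is at most
`(1/(2i+j+1) + 1/(2(n-i)+k-j+1))^μ ≤ 2^(μ-1) (1/(2i+j+1)^μ + 1/(2(n-i)+k-j+1)^μ)` by convexity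
of `x ↦ x^μ`. The reflection `(i, j) ↦ (n-i, k-j)` of the summation rectangle turns the second
sum into the first, and that finite sum is a partial sum of `S`. The series `S` converges for
`μ > 2` because `(2i+j+1)^μ ≥ ((i+1)(j+1))^(μ/2)`.
-/

lemma Real.rpow_add_le_mul_rpow_add_rpow {x y : ℝ} (hx : 0 ≤ x) (hy : 0 ≤ y) {p : ℝ}
    (hp : 1 ≤ p) : (x + y) ^ p ≤ 2 ^ (p - 1) * (x ^ p + y ^ p) := by
  lift x to NNReal using hx
  lift y to NNReal using hy
  exact_mod_cast NNReal.rpow_add_le_mul_rpow_add_rpow x y hp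

lemma rpow_div_mul_le_of_le_add {a b c μ : ℝ} (ha : 0 < a) (hb : 0 < b) (hc : 0 ≤ c)
    (hcab : c ≤ a + b) (hμ : 1 ≤ μ) :
    (c / (a * b)) ^ μ ≤ 2 ^ (μ - 1) * (1 / a ^ μ + 1 / b ^ μ) := by
  have hsplit : c / (a * b) ≤ 1 / a + 1 / b := by
    rw [div_add_div _ _ ha.ne' hb.ne', one_mul, mul_one, add_comm b a]
    gcongr
  calc (c / (a * b)) ^ μ ≤ (1 / a + 1 / b) ^ μ := by gcongr
    _ ≤ 2 ^ (μ - 1) * ((1 / a) ^ μ + (1 / b) ^ μ) :=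
      Real.rpow_add_le_mul_rpow_add_rpow (by positivity) (by positivity) hμ
    _ = 2 ^ (μ - 1) * (1 / a ^ μ + 1 / b ^ μ) := by
      rw [Real.div_rpow zero_le_one ha.le, Real.div_rpow zero_le_one hb.le, Real.one_rpow]

lemma mul_rpow_half_le_rpow {x y z μ : ℝ} (hx : 0 ≤ x) (hy : 0 ≤ y) (hxz : x ≤ z)
    (hyz : y ≤ z) (hμ : 0 ≤ μ) : x ^ (μ / 2) * y ^ (μ / 2) ≤ z ^ μ := by
  rw [← Real.mul_rpow hx hy]
  calc (x * y) ^ (μ / 2) ≤ (z ^ 2) ^ (μ / 2) := by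
        gcongr
        rw [sq]
        exact mul_le_mul hxz hyz hy (hx.trans hxz)
    _ = z ^ μ := by
        rw [← Real.rpow_natCast_mul (hx.trans hxz), Nat.cast_ofNat,
          mul_div_cancel₀ μ two_ne_zero]

lemma summable_one_div_two_mul_add_add_one_rpow {μ : ℝ} (hμ : 2 < μ) :
    Summable fun p : ℕ × ℕ => (1 : ℝ) / (2 * (p.2 : ℝ) + p.1 + 1) ^ μ := by
  have hhalf : Summable fun n : ℕ => (1 : ℝ) / ((n : ℝ) + 1) ^ (μ / 2) := by
    simpa using (summable_nat_add_iff 1).2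
      (Real.summable_one_div_nat_rpow.2 (by linarith : 1 < μ / 2))
  have hprod := hhalf.mul_of_nonneg hhalf (fun _ => by positivity) fun _ => by positivity
  refine hprod.of_nonneg_of_le (fun _ => by positivity) fun ⟨j, i⟩ => ?_
  rw [div_mul_div_comm, one_mul]
  gcongr
  have hi : (0 : ℝ) ≤ i := i.cast_nonneg
  have hj : (0 : ℝ) ≤ j := j.cast_nonneg
  exact mul_rpow_half_le_rpow (by positivity) (by positivity) (by linarith) (by linarith)
    (by linarith)

lemma sum_sum_le_tsum_tsum {α β : Type*} {f : α × β → ℝ} (hf : 0 ≤ f) (hs : Summable f)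
    (s : Finset α) (t : Finset β) :
    ∑ a ∈ s, ∑ b ∈ t, f (a, b) ≤ ∑' a, ∑' b, f (a, b) := by
  rw [← hs.tsum_prod, ← sum_product]
  exact hs.sum_le_tsum _ fun p _ => hf p

lemma sum_range_succ_reflect_cast {M : Type*} [AddCommMonoid M] (g : ℝ → M) (n : ℕ) :
    ∑ i ∈ range (n + 1), g ((n : ℝ) - i) = ∑ i ∈ range (n + 1), g i := by
  rw [← sum_range_reflect (fun i => g i)]
  refine sum_congr rfl fun i hi => ?_
  rw [Nat.add_sub_cancel, Nat.cast_sub (Nat.lt_succ_iff.1 (mem_range.1 hi))]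

/-- For real `μ > 2`, the double sum over `0 ≤ j ≤ k`, `0 ≤ i ≤ n` of
`((2n+k+1)/((2i+j+1)(2(n-i)+k-j+1)))^μ` is bounded by `2^μ` times the (finite)
double series `S = Σ_{j≥0} Σ_{i≥0} 1/(2i+j+1)^μ`. -/
theorem double_sum_bound (μ : ℝ) (hμ : 2 < μ) (n k : ℕ) :
    (Summable fun p : ℕ × ℕ => (1 : ℝ) / (2 * (p.2 : ℝ) + p.1 + 1) ^ μ) ∧
    ∑ j ∈ Finset.range (k + 1), ∑ i ∈ Finset.range (n + 1),
        ((2 * (n : ℝ) + k + 1) /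
          ((2 * (i : ℝ) + j + 1) * (2 * ((n : ℝ) - i) + ((k : ℝ) - j) + 1))) ^ μ
      ≤ (2 : ℝ) ^ μ * ∑' (j : ℕ), ∑' (i : ℕ), (1 : ℝ) / (2 * (i : ℝ) + j + 1) ^ μ := by
  have hsum := summable_one_div_two_mul_add_add_one_rpow hμ
  refine ⟨hsum, ?_⟩
  set T := ∑ j ∈ range (k + 1), ∑ i ∈ range (n + 1), (1 : ℝ) / (2 * (i : ℝ) + j + 1) ^ μ
  have hreflect : ∑ j ∈ range (k + 1), ∑ i ∈ range (n + 1),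
      (1 : ℝ) / (2 * ((n : ℝ) - i) + ((k : ℝ) - j) + 1) ^ μ = T :=
    (sum_congr rfl fun (j : ℕ) _ => sum_range_succ_reflect_cast
        (fun x => 1 / (2 * x + ((k : ℝ) - j) + 1) ^ μ) n).trans <|
      sum_range_succ_reflect_cast
        (fun y => ∑ i ∈ range (n + 1), 1 / (2 * (i : ℝ) + y + 1) ^ μ) k
  calc _ ≤ ∑ j ∈ range (k + 1), ∑ i ∈ range (n + 1), 2 ^ (μ - 1) *
          (1 / (2 * (i : ℝ) + j + 1) ^ μ +
            1 / (2 * ((n : ℝ) - i) + ((k : ℝ) - j) + 1) ^ μ) := by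
        gcongr with j hj i hi
        have hjk : (j : ℝ) ≤ k := by exact_mod_cast Nat.lt_succ_iff.1 (mem_range.1 hj)
        have hin : (i : ℝ) ≤ n := by exact_mod_cast Nat.lt_succ_iff.1 (mem_range.1 hi)
        exact rpow_div_mul_le_of_le_add (by positivity) (by linarith) (by positivity)
          (by linarith) (by linarith)
    _ = 2 ^ (μ - 1) * (T + T) := by simp only [← mul_sum, sum_add_distrib, hreflect, T]
    _ = 2 ^ μ * T := by rw [Real.rpow_sub_one two_ne_zero]; ring
    _ ≤ _ := by
        gcongr
        exact sum_sum_le_tsum_tsum (fun _ => by positivity) hsum _ _
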